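/- If T is a quasitriangular bounded linear operator on a complex Hilbert space H, then j_T(λ) ≤ j_{T*}(λ̄) for every λ ∈ ℂ, where T* is the adjoint of T. -/

import Mathlib

open Filter ContinuousLinearMap

/-- The injectivity radius `j_T(z) = inf {‖(T - z)h‖ : ‖h‖ = 1}`. -/
noncomputable def injRad {H : Type*} [NormedAddCommGroup H] [InnerProductSpace ℂ H]
    (T : H →L[ℂ] H) (z : ℂ) : ℝ :=
  sInf {r : ℝ | ∃ h : H, ‖h‖ = 1 ∧ r = ‖T h - z • h‖}

/-- A filtration: an increasing sequence of finite-rank orthogonal projections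
whose ranges have dense union. -/
structure Filtration (H : Type*) [NormedAddCommGroup H] [InnerProductSpace ℂ H]
    [CompleteSpace H] where
  P : ℕ → H →L[ℂ] H
  idem : ∀ n, (P n) ∘L (P n) = P n
  selfadj : ∀ n, IsSelfAdjoint (P n)
  finiteRank : ∀ n, FiniteDimensional ℂ (LinearMap.range (P n : H →ₗ[ℂ] H))
  mono : ∀ n, LinearMap.range (P n : H →ₗ[ℂ] H) ≤ LinearMap.range (P (n + 1) : H →ₗ[ℂ] H)
  dense : Dense (⋃ n, (LinearMap.range (P n : H →ₗ[ℂ] H) : Set H))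

/-- `T` is quasitriangular if `‖(I - Pₙ) T Pₙ‖ → 0` for some filtration `{Pₙ}`. -/
def IsQuasitriangular {H : Type*} [NormedAddCommGroup H] [InnerProductSpace ℂ H]
    [CompleteSpace H] (T : H →L[ℂ] H) : Prop :=
  ∃ F : Filtration H,
    Tendsto (fun n => ‖((1 : H →L[ℂ] H) - F.P n) ∘L T ∘L F.P n‖) atTop (nhds 0)

/-! Write `S = T - λ` and `j = j_T(λ)`, so that `j ‖x‖ ≤ ‖S x‖`. The compression of `S` to the
finite-dimensional range of `Pₙ` is then bounded below by `j - εₙ`, where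
`εₙ = ‖(1 - Pₙ) S Pₙ‖ → 0`; being injective on a finite-dimensional space, it is onto, and for
`u = Pₙ S v` we get `‖u‖² = ⟪v, S* u⟫`, so `S*` is bounded below by `j - εₙ` on `ran Pₙ` as well.
Since `Pₙ → 1` strongly, letting `n → ∞` gives `j ‖g‖ ≤ ‖S* g‖` for every `g`. -/

open scoped InnerProductSpace Topology

section
variable {𝕜 E : Type*} [NontriviallyNormedField 𝕜] [NormedAddCommGroup E] [NormedSpace 𝕜 E]

lemma mul_norm_le_norm_compression_apply {P S : E →L[𝕜] E} {c : ℝ}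
    (hS : ∀ x, c * ‖x‖ ≤ ‖S x‖) {v : E} (hv : P v = v) :
    (c - ‖(1 - P) ∘L S ∘L P‖) * ‖v‖ ≤ ‖P (S v)‖ := by
  have hsplit : S v = P (S v) + ((1 - P) ∘L S ∘L P) v := by simp [hv]
  calc (c - ‖(1 - P) ∘L S ∘L P‖) * ‖v‖
      ≤ ‖S v‖ - ‖((1 - P) ∘L S ∘L P) v‖ := by
        nlinarith [hS v, ((1 - P) ∘L S ∘L P).le_opNorm v]
    _ ≤ ‖P (S v)‖ := by
        nth_rewrite 1 [hsplit]
        linarith [norm_add_le (P (S v)) (((1 - P) ∘L S ∘L P) v)]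

end

section
variable {𝕜 E F : Type*} [RCLike 𝕜] [NormedAddCommGroup E] [InnerProductSpace 𝕜 E]
  [NormedAddCommGroup F] [InnerProductSpace 𝕜 F] [CompleteSpace E] [CompleteSpace F]

lemma mul_norm_le_norm_adjoint_apply_of_inner_eq {S : E →L[𝕜] F} {c : ℝ} (hc : 0 ≤ c)
    {u : F} {v : E} (hv : c * ‖v‖ ≤ ‖u‖) (huv : ⟪S v, u⟫_𝕜 = ⟪u, u⟫_𝕜) :
    c * ‖u‖ ≤ ‖adjoint S u‖ := by
  have hsq : ‖u‖ ^ 2 ≤ ‖v‖ * ‖adjoint S u‖ := by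
    rw [← inner_self_eq_norm_sq (𝕜 := 𝕜), ← huv, ← adjoint_inner_right]
    exact (RCLike.re_le_norm _).trans (norm_inner_le_norm _ _)
  rcases (norm_nonneg u).eq_or_lt with hu | hu
  · rw [← hu, mul_zero]
    exact norm_nonneg _
  refine le_of_mul_le_mul_left ?_ hu
  calc ‖u‖ * (c * ‖u‖) = c * ‖u‖ ^ 2 := by ring
    _ ≤ c * (‖v‖ * ‖adjoint S u‖) := mul_le_mul_of_nonneg_left hsq hc
    _ = c * ‖v‖ * ‖adjoint S u‖ := by ring
    _ ≤ ‖u‖ * ‖adjoint S u‖ := mul_le_mul_of_nonneg_right hv (norm_nonneg _)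

lemma mul_norm_le_norm_adjoint_apply_of_mem_range {P S : E →L[𝕜] E} (hP : IsStarProjection P)
    [FiniteDimensional 𝕜 P.range] {c : ℝ} (hS : ∀ x, c * ‖x‖ ≤ ‖S x‖) {u : E}
    (hu : u ∈ P.range) :
    (c - ‖(1 - P) ∘L S ∘L P‖) * ‖u‖ ≤ ‖adjoint S u‖ := by
  set c' := c - ‖(1 - P) ∘L S ∘L P‖
  rcases le_or_gt c' 0 with hc' | hc'
  · exact (mul_nonpos_of_nonpos_of_nonneg hc' (norm_nonneg u)).trans (norm_nonneg _)
  have hfix : ∀ {w}, w ∈ P.range → P w = w := fun hw =>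
    (LinearMap.IsIdempotentElem.mem_range_iff hP.isIdempotentElem.toLinearMap).mp hw
  have hbelow : ∀ v ∈ P.range, c' * ‖v‖ ≤ ‖P (S v)‖ := fun v hv =>
    mul_norm_le_norm_compression_apply hS (hfix hv)
  have hinj : Set.InjOn (P ∘L S : E →ₗ[𝕜] E) P.range := by
    intro v hv w hw hvw
    have hzero := hbelow (v - w) (sub_mem hv hw)
    simp only [coe_coe, coe_comp, Function.comp_apply] at hvw
    rw [map_sub, map_sub, hvw, sub_self, norm_zero] at hzero
    exact sub_eq_zero.mp (norm_le_zero_iff.mp (nonpos_of_mul_nonpos_right hzero hc'))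
  obtain ⟨v, hv, hvu⟩ := (LinearMap.injOn_iff_surjOn (p := P.range) (f := (P ∘L S : E →ₗ[𝕜] E))
    fun v _ => ⟨S v, rfl⟩).mp hinj hu
  change P (S v) = u at hvu
  refine mul_norm_le_norm_adjoint_apply_of_inner_eq hc'.le (hvu ▸ hbelow v hv) ?_
  have hsymm : ⟪P (S v), u⟫_𝕜 = ⟪S v, P u⟫_𝕜 := hP.isSelfAdjoint.isSymmetric (S v) u
  rw [hvu, hfix hu] at hsymm
  exact hsymm.symm

end

section InjRad
variable {H : Type*} [NormedAddCommGroup H] [InnerProductSpace ℂ H]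

lemma injRad_nonneg (T : H →L[ℂ] H) (z : ℂ) : 0 ≤ injRad T z :=
  Real.sInf_nonneg (by rintro _ ⟨h, -, rfl⟩; positivity)

lemma injRad_of_subsingleton [Subsingleton H] (T : H →L[ℂ] H) (z : ℂ) : injRad T z = 0 := by
  have : ∀ h : H, ‖h‖ ≠ 1 := fun h => by simp [Subsingleton.elim h 0]
  simp [injRad, this]

lemma injRad_mul_norm_le (T : H →L[ℂ] H) (z : ℂ) (h : H) : injRad T z * ‖h‖ ≤ ‖T h - z • h‖ := by
  rcases eq_or_ne h 0 with rfl | h0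
  · simp
  have hunit : ‖(‖h‖⁻¹ : ℂ) • h‖ = 1 := by simp [norm_smul, h0]
  have hle : injRad T z ≤ ‖T ((‖h‖⁻¹ : ℂ) • h) - z • (‖h‖⁻¹ : ℂ) • h‖ :=
    csInf_le ⟨0, by rintro _ ⟨h, -, rfl⟩; positivity⟩ ⟨_, hunit, rfl⟩
  rw [map_smul, smul_comm, ← smul_sub, norm_smul] at hle
  simpa [h0, ← div_eq_inv_mul, le_div_iff₀] using hle

lemma le_injRad [Nontrivial H] {T : H →L[ℂ] H} {z : ℂ} {c : ℝ}
    (hc : ∀ h, c * ‖h‖ ≤ ‖T h - z • h‖) : c ≤ injRad T z := by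
  obtain ⟨h, hh⟩ := exists_norm_eq H zero_le_one
  refine le_csInf ⟨_, h, hh, rfl⟩ ?_
  rintro _ ⟨h, hh, rfl⟩
  simpa [hh] using hc h

end InjRad

namespace Filtration
variable {H : Type*} [NormedAddCommGroup H] [InnerProductSpace ℂ H] [CompleteSpace H]
  (F : Filtration H)

lemma isStarProjection (n : ℕ) : IsStarProjection (F.P n) := ⟨F.idem n, F.selfadj n⟩

lemma tendsto_apply (x : H) : Tendsto (fun n => F.P n x) atTop (𝓝 x) := by
  have := F.finiteRank
  have hproj n : F.P n = (F.P n).range.starProjection :=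
    (isStarProjection_iff_eq_starProjection_range.mp (F.isStarProjection n)).2
  refine (Submodule.starProjection_tendsto_self _ (monotone_nat_of_le_succ F.mono) x ?_).congr
    fun n => (DFunLike.congr_fun (hproj n) x).symm
  rw [top_le_iff, ← Submodule.dense_iff_topologicalClosure_eq_top]
  exact F.dense.mono (Set.iUnion_subset fun n => SetLike.coe_subset_coe.mpr (le_iSup _ n))

end Filtration

section Quasitriangular
variable {H : Type*} [NormedAddCommGroup H] [InnerProductSpace ℂ H] [CompleteSpace H]

lemma IsQuasitriangular.sub_smul_one {T : H →L[ℂ] H} (hT : IsQuasitriangular T) (z : ℂ) :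
    IsQuasitriangular (T - z • 1) := by
  obtain ⟨F, hF⟩ := hT
  refine ⟨F, hF.congr fun n => ?_⟩
  have hidem x : F.P n (F.P n x) = F.P n x := DFunLike.congr_fun (F.idem n) x
  congr 1
  ext x
  simp [hidem]

theorem IsQuasitriangular.mul_norm_le_norm_adjoint_apply {S : H →L[ℂ] H}
    (hS : IsQuasitriangular S) {c : ℝ} (hc : ∀ x, c * ‖x‖ ≤ ‖S x‖) (g : H) :
    c * ‖g‖ ≤ ‖adjoint S g‖ := by
  obtain ⟨F, hcorner⟩ := hS
  have hcompress n :
      (c - ‖(1 - F.P n) ∘L S ∘L F.P n‖) * ‖F.P n g‖ ≤ ‖adjoint S (F.P n g)‖ :=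
    haveI := F.finiteRank n
    mul_norm_le_norm_adjoint_apply_of_mem_range (F.isStarProjection n) hc ⟨g, rfl⟩
  have hPg := F.tendsto_apply g
  refine le_of_tendsto_of_tendsto' ?_ (((adjoint S).continuous.tendsto g).comp hPg).norm hcompress
  simpa using (tendsto_const_nhds.sub hcorner).mul hPg.norm

end Quasitriangular

theorem quasitriangular_injRad_le {H : Type*} [NormedAddCommGroup H] [InnerProductSpace ℂ H] [CompleteSpace H]
    (T : H →L[ℂ] H) (hT : IsQuasitriangular T) (lam : ℂ) :
    injRad T lam ≤ injRad (ContinuousLinearMap.adjoint T) ((starRingEnd ℂ) lam) := by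
  rcases subsingleton_or_nontrivial H with hH | hH
  · rw [injRad_of_subsingleton]
    exact injRad_nonneg _ _
  refine le_injRad fun g => ?_
  have hS := (hT.sub_smul_one lam).mul_norm_le_norm_adjoint_apply (c := injRad T lam)
    (fun x => by simpa using injRad_mul_norm_le T lam x) g
  simpa [map_smulₛₗ, adjoint_one] using hS
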